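/- arXiv:2403.05611 — 2 statements merged into one kernel-verified Lean document; each statement's English description precedes it below -/
import Mathlib

section
/- Let G be a P_5-free graph containing an induced antihole C = complement of C_{2t+1} (t ≥ 2) with vertices v_1,...,v_{2t+1} (v_i v_j ∈ E iff |i−j|>1, indices mod 2t+1). Then for each i, the set S(v_i, v_{i+1}) is complete to the set S(V(C)\{v_i, v_{i+1}}), i.e., every vertex whose neighborhood on C is exactly {v_i,v_{i+1}} is adjacent to every vertex whose neighborhood on C is exactly V(C)\{v_i,v_{i+1}}. -/
/-!
If `u` and `v` were nonadjacent, then `u, v_i, v_{i-2}, v, v_{i-1}` would induce a `P₅`: `u` sees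
only `v_i, v_{i+1}` on the antihole and `v` sees all the other vertices, while in the antihole
`v_i v_{i-2}` is an edge and `v_{i-1}` is a non-neighbour of both `v_i` and `v_{i-2}`. No
distinctness has to be checked, since no two vertices of `P₅` have the same neighbourhood.
-/

open SimpleGraph

/-- `G` contains no induced subgraph isomorphic to `H`. -/
def HFree {W V : Type*} (H : SimpleGraph W) (G : SimpleGraph V) : Prop :=
  IsEmpty (H ↪g G)

/-- `G` is `k`-vertex-critical: `χ(G) = k` and deleting any vertex decreases
the chromatic number below `k`. -/
def IsKVertexCritical {V : Type*} (G : SimpleGraph V) (k : ℕ) : Prop :=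
  G.chromaticNumber = k ∧ ∀ v : V, (G.induce {v}ᶜ).chromaticNumber < k

/-- The star `K_{1,s}`: center `0`, leaves `1, …, s`. -/
def starGraph (s : ℕ) : SimpleGraph (Fin (s + 1)) :=
  SimpleGraph.fromRel (fun i _ => (i : ℕ) = 0)

/-- `K_{1,s} + P_1`: the disjoint union of the star `K_{1,s}`
(center `0`, leaves `1, …, s`) and the isolated vertex `s + 1`. -/
def starPlusP1 (s : ℕ) : SimpleGraph (Fin (s + 2)) :=
  SimpleGraph.fromRel (fun i j => (i : ℕ) = 0 ∧ (j : ℕ) ≠ 0 ∧ (j : ℕ) ≤ s)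

/-- The complement of `K_3 + 2P_1`: vertices `0,1,2` pairwise nonadjacent,
vertices `3,4` adjacent to everything else. -/
def coK3Plus2P1 : SimpleGraph (Fin 5) :=
  SimpleGraph.fromRel (fun i j => 3 ≤ (i : ℕ) ∨ 3 ≤ (j : ℕ))

open Fin.CommRing

theorem Fin.natCast_ne_zero_of_pos_of_lt {n k : ℕ} [NeZero n] (hk : 0 < k) (hkn : k < n) :
    (k : Fin n) ≠ 0 := by
  rw [Ne, Fin.natCast_eq_zero]
  exact fun h => (Nat.le_of_dvd hk h).not_gt hkn

theorem Fin.not_sub_eq_self_or_add_one {n k : ℕ} [NeZero n] (hk : 0 < k) (hkn : k + 1 < n)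
    (i : Fin n) : ¬(i - k = i ∨ i - k = i + 1) := by
  rintro (h | h)
  · exact natCast_ne_zero_of_pos_of_lt (n := n) hk (by omega) (by linear_combination -h)
  · exact natCast_ne_zero_of_pos_of_lt (k := k + 1) (by omega) hkn
      (by push_cast; linear_combination -h)

namespace SimpleGraph

section Antihole

variable {n : ℕ} [NeZero n]

theorem compl_cycleGraph_adj_iff (hn : 2 ≤ n) {a b : Fin n} :
    (cycleGraph n)ᶜ.Adj a b ↔ a ≠ b ∧ a - b ≠ 1 ∧ b - a ≠ 1 := by
  have hone (c : Fin n) : c.val = 1 ↔ c = 1 := by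
    rw [Fin.ext_iff, Fin.val_one', Nat.one_mod_eq_one.2 (by omega)]
  rw [compl_adj, cycleGraph_adj', hone, hone]
  tauto

theorem compl_cycleGraph_not_adj_of_sub_eq_one (hn : 2 ≤ n) {a b : Fin n} (h : a - b = 1) :
    ¬(cycleGraph n)ᶜ.Adj a b :=
  fun hab => ((compl_cycleGraph_adj_iff hn).1 hab).2.1 h

theorem compl_cycleGraph_adj_sub_two (hn : 4 ≤ n) (i : Fin n) : (cycleGraph n)ᶜ.Adj i (i - 2) := by
  have h1 : (1 : Fin n) ≠ 0 := by
    exact_mod_cast Fin.natCast_ne_zero_of_pos_of_lt (k := 1) (by omega) (by omega)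
  have h2 : (2 : Fin n) ≠ 0 := by
    exact_mod_cast Fin.natCast_ne_zero_of_pos_of_lt (k := 2) (by omega) (by omega)
  have h3 : (3 : Fin n) ≠ 0 := by
    exact_mod_cast Fin.natCast_ne_zero_of_pos_of_lt (k := 3) (by omega) (by omega)
  exact (compl_cycleGraph_adj_iff (by omega)).2 ⟨fun h => h2 (by linear_combination h),
    fun h => h1 (by linear_combination h), fun h => h3 (by linear_combination -h)⟩

end Antihole

section InducedPath

variable {W V : Type*} {H : SimpleGraph W} {G : SimpleGraph V}

theorem injective_of_adj_iff (hH : Function.Injective H.neighborSet) {w : W → V}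
    (hw : ∀ a b, G.Adj (w a) (w b) ↔ H.Adj a b) : Function.Injective w := by
  intro a b hab
  apply hH
  ext c
  simp only [mem_neighborSet, ← hw, hab]

theorem pathGraph_five_neighborSet_injective : Function.Injective (pathGraph 5).neighborSet := by
  have key : ∀ a b : Fin 5, (∀ c, (pathGraph 5).Adj a c ↔ (pathGraph 5).Adj b c) → a = b := by
    simp only [pathGraph_adj]
    decide
  exact fun a b hab => key a b (Set.ext_iff.1 hab)

theorem nonempty_pathGraph_five_embedding {a b c d e : V}
    (hab : G.Adj a b) (hbc : G.Adj b c) (hcd : G.Adj c d) (hde : G.Adj d e)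
    (hac : ¬G.Adj a c) (had : ¬G.Adj a d) (hae : ¬G.Adj a e)
    (hbd : ¬G.Adj b d) (hbe : ¬G.Adj b e) (hce : ¬G.Adj c e) :
    Nonempty (pathGraph 5 ↪g G) := by
  have hw (x y : Fin 5) :
      G.Adj (![a, b, c, d, e] x) (![a, b, c, d, e] y) ↔ (pathGraph 5).Adj x y := by
    fin_cases x <;> fin_cases y <;>
      simp [pathGraph_adj, hab, hbc, hcd, hde, hac, had, hae, hbd, hbe, hce, hab.symm, hbc.symm,
        hcd.symm, hde.symm, mt G.adj_symm hac, mt G.adj_symm had, mt G.adj_symm hae,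
        mt G.adj_symm hbd, mt G.adj_symm hbe, mt G.adj_symm hce]
  exact ⟨⟨⟨_, injective_of_adj_iff pathGraph_five_neighborSet_injective hw⟩, hw _ _⟩⟩

end InducedPath

end SimpleGraph

theorem stmt14_general {V : Type*} (G : SimpleGraph V) (hP5 : HFree (pathGraph 5) G)
    (t : ℕ) (ht : 2 ≤ t) (f : ((cycleGraph (2 * t + 1))ᶜ) ↪g G)
    (i : Fin (2 * t + 1)) (u v : V)
    (hu2 : ∀ j, G.Adj u (f j) ↔ (j = i ∨ j = i + 1))
    (hv2 : ∀ j, G.Adj v (f j) ↔ ¬ (j = i ∨ j = i + 1)) :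
    G.Adj u v := by
  by_contra huv
  have hi1 : ¬(i - 1 = i ∨ i - 1 = i + 1) := by
    exact_mod_cast Fin.not_sub_eq_self_or_add_one (k := 1) (by omega) (by omega) i
  have hi2 : ¬(i - 2 = i ∨ i - 2 = i + 1) := by
    exact_mod_cast Fin.not_sub_eq_self_or_add_one (k := 2) (by omega) (by omega) i
  have hnotAdj {a b : Fin (2 * t + 1)} (h : a - b = 1) : ¬G.Adj (f a) (f b) :=
    f.map_adj_iff.not.2 (compl_cycleGraph_not_adj_of_sub_eq_one (by omega) h)
  exact hP5.false (nonempty_pathGraph_five_embedding (a := u) (b := f i) (c := f (i - 2))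
    (d := v) (e := f (i - 1))
    ((hu2 i).2 (.inl rfl)) (f.map_adj_iff.2 (compl_cycleGraph_adj_sub_two (by omega) i))
    ((hv2 _).2 hi2).symm ((hv2 _).2 hi1)
    (mt (hu2 _).1 hi2) huv (mt (hu2 _).1 hi1)
    (fun h => (hv2 i).1 h.symm (.inl rfl)) (hnotAdj (by ring))
    (fun h => hnotAdj (by ring) h.symm)).some

theorem stmt14 {V : Type*} (G : SimpleGraph V) (hP5 : HFree (pathGraph 5) G)
    (t : ℕ) (ht : 2 ≤ t) (f : ((cycleGraph (2 * t + 1))ᶜ) ↪g G)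
    (i : Fin (2 * t + 1)) (u v : V)
    (hu : u ∉ Set.range f) (hu2 : ∀ j, G.Adj u (f j) ↔ (j = i ∨ j = i + 1))
    (hv : v ∉ Set.range f) (hv2 : ∀ j, G.Adj v (f j) ↔ ¬ (j = i ∨ j = i + 1)) :
    G.Adj u v :=
  stmt14_general G hP5 t ht f i u v hu2 hv2
end

section
/- For every fixed integer k ≥ 1, there are (up to isomorphism) only finitely many k-vertex-critical (P_5, K_{1,4}+P_1)-free graphs. -/
open SimpleGraph

/-!
Induction on `k`. A `k`-critical graph is `K_{k+1}`-free, so by Ramsey's theorem it is small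
unless it has an independent set `S` of size 16. As the graph is `K_{1,4}+P_1`-free, every vertex
either has at most three neighbours in `S` or is complete to `S`. If some vertex is complete to
`S`, the set `F` of such vertices is complete to its complement, so the graph is the join of
`G[F]` and `G[Fᶜ]`; both are critical, their chromatic numbers add up to `k`, and induction
applies. Otherwise every vertex has few neighbours in `S`; Ramsey's theorem inside a
neighbourhood, together with a vertex of `S` adjacent to none of the vertices involved, bounds all
degrees, and a connected `P_5`-free graph has diameter at most 3, so the graph is small.
-/

open Finset

namespace SimpleGraph

variable {V : Type*} {G : SimpleGraph V}

theorem exists_isNClique_or_exists_isNIndepSet (s t : ℕ) (A : Finset V)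
    (hA : (s + t).choose s ≤ #A) : (∃ K ⊆ A, G.IsNClique s K) ∨ ∃ I ⊆ A, G.IsNIndepSet t I := by
  classical
  induction s generalizing t A with
  | zero => exact .inl ⟨∅, empty_subset _, isNClique_empty.2 rfl⟩
  | succ s ihs =>
    induction t generalizing A with
    | zero =>
      exact .inr ⟨∅, empty_subset _, by rw [← isNClique_compl]; exact isNClique_empty.2 rfl⟩
    | succ t iht =>
      obtain ⟨a, ha⟩ : A.Nonempty := by
        rw [← card_pos]; exact lt_of_lt_of_le (Nat.choose_pos (by omega)) hA
      set B := (A.erase a).filter (G.Adj a)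
      set C := (A.erase a).filter (fun b => ¬G.Adj a b)
      have hBA : B ⊆ A := (filter_subset _ _).trans (erase_subset _ _)
      have hCA : C ⊆ A := (filter_subset _ _).trans (erase_subset _ _)
      have hBC : #B + #C + 1 = #A := by
        rw [card_filter_add_card_filter_not, card_erase_add_one ha]
      have hpascal : (s + 1 + (t + 1)).choose (s + 1)
          = (s + (t + 1)).choose s + (s + 1 + t).choose (s + 1) := by
        rw [show s + 1 + (t + 1) = s + 1 + t + 1 by omega, Nat.choose_succ_succ',
          show s + 1 + t = s + (t + 1) by omega]
      by_cases hB : (s + (t + 1)).choose s ≤ #B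
      · rcases ihs (t + 1) B hB with ⟨K, hKB, hK⟩ | ⟨I, hIB, hI⟩
        · refine .inl ⟨insert a K, insert_subset ha (hKB.trans hBA), hK.insert fun b hb => ?_⟩
          exact (mem_filter.1 (hKB hb)).2
        · exact .inr ⟨I, hIB.trans hBA, hI⟩
      · rcases iht C (by omega) with ⟨K, hKC, hK⟩ | ⟨I, hIC, hI⟩
        · exact .inl ⟨K, hKC.trans hCA, hK⟩
        · refine .inr ⟨insert a I, insert_subset ha (hIC.trans hCA), ?_⟩
          rw [← isNClique_compl] at hI ⊢
          refine hI.insert fun b hb => ?_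
          obtain ⟨hb, hab⟩ := mem_filter.1 (hIC hb)
          exact (compl_adj G a b).2 ⟨(ne_of_mem_erase hb).symm, hab⟩

theorem CliqueFree.exists_isNIndepSet {s : ℕ} (hG : G.CliqueFree s) (t : ℕ) {A : Finset V}
    (hA : (s + t).choose s ≤ #A) : ∃ I ⊆ A, G.IsNIndepSet t I :=
  (exists_isNClique_or_exists_isNIndepSet s t A hA).resolve_left fun ⟨K, _, hK⟩ => hG K hK

theorem CliqueFree.card_lt_choose [Fintype V] {s t : ℕ} (hG : G.CliqueFree s)
    (ht : ∀ I, ¬G.IsNIndepSet t I) : Fintype.card V < (s + t).choose s := by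
  by_contra! h
  obtain ⟨I, -, hI⟩ := hG.exists_isNIndepSet t (A := univ) (by rwa [card_univ])
  exact ht I hI

theorem Walk.dist_getVert_getVert_of_length_eq_dist {u v : V} {p : G.Walk u v}
    (hp : p.length = G.dist u v) {i j : ℕ} (hij : i ≤ j) (hj : j ≤ p.length) :
    G.dist (p.getVert i) (p.getVert j) = j - i := by
  obtain ⟨q, hq⟩ : ∃ q : G.Walk (p.getVert i) (p.getVert j), q.length = j - i :=
    ⟨((p.take j).drop i).copy (by rw [take_getVert, min_eq_right hij]) rfl, by
      simp [take_length, min_eq_left hj]⟩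
  obtain ⟨r, hr⟩ := q.reachable.exists_walk_length_eq_dist
  have hshort := G.dist_le ((p.take i).append (r.append (p.drop j)))
  have hq' := G.dist_le q
  simp only [Walk.length_append, take_length, drop_length] at hshort
  omega

theorem exists_chromaticNumber_eq_natCast [Finite V] (G : SimpleGraph V) :
    ∃ n : ℕ, G.chromaticNumber = n :=
  (ENat.ne_top_iff_exists.1 (chromaticNumber_ne_top_iff_exists.2
    ⟨_, G.colorable_chromaticNumber_of_fintype⟩)).imp fun _ => Eq.symm

theorem colorable_sub_one_of_chromaticNumber_lt {n : ℕ} (h : G.chromaticNumber < n) :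
    G.Colorable (n - 1) := by
  obtain ⟨m, hm⟩ := ENat.ne_top_iff_exists.1 h.ne_top
  rw [← hm, Nat.cast_lt] at h
  rw [← chromaticNumber_le_iff_colorable, ← hm, Nat.cast_le]
  omega

theorem chromaticNumber_le_induce_add_induce_compl (s : Set V) :
    G.chromaticNumber ≤ (G.induce s).chromaticNumber + (G.induce sᶜ).chromaticNumber := by
  classical
  rcases eq_or_ne (G.induce s).chromaticNumber ⊤ with hs | hs
  · simp [hs]
  rcases eq_or_ne (G.induce sᶜ).chromaticNumber ⊤ with hsc | hsc
  · simp [hsc]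
  obtain ⟨f⟩ := colorable_of_chromaticNumber_ne_top hs
  obtain ⟨g⟩ := colorable_of_chromaticNumber_ne_top hsc
  let C : G.Coloring (Fin _ ⊕ Fin _) :=
    Coloring.mk (fun v => if h : v ∈ s then .inl (f ⟨v, h⟩) else .inr (g ⟨v, h⟩))
      fun {u v} huv heq => by
        by_cases hu : u ∈ s <;> by_cases hv : v ∈ s <;> simp only [hu, hv, dite_true,
          dite_false, reduceCtorEq, Sum.inl.injEq, Sum.inr.injEq] at heq
        · exact f.valid (show (G.induce s).Adj ⟨u, hu⟩ ⟨v, hv⟩ from huv) heq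
        · exact g.valid (show (G.induce sᶜ).Adj ⟨u, hu⟩ ⟨v, hv⟩ from huv) heq
  calc G.chromaticNumber ≤ _ := C.colorable.chromaticNumber_le
    _ = _ := by simp [ENat.natCast_toNat hs, ENat.natCast_toNat hsc]

theorem chromaticNumber_add_le_of_forall_adj {W₁ W₂ : Type*} {H₁ : SimpleGraph W₁}
    {H₂ : SimpleGraph W₂} (f₁ : H₁ →g G) (f₂ : H₂ →g G) (h : ∀ x y, G.Adj (f₁ x) (f₂ y)) :
    H₁.chromaticNumber + H₂.chromaticNumber ≤ G.chromaticNumber := by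
  classical
  rcases eq_or_ne G.chromaticNumber ⊤ with hG | hG
  · simp [hG]
  obtain ⟨C⟩ := colorable_of_chromaticNumber_ne_top hG
  let T : Finset (Fin _) := {c | ∃ x, C (f₁ x) = c}
  have h₁ : H₁.Colorable #T := by
    simpa using (Coloring.mk (fun x => (⟨C (f₁ x), by simp [T]⟩ : T))
      fun hxy heq => C.valid (f₁.map_adj hxy) (congrArg Subtype.val heq)).colorable
  have h₂ : H₂.Colorable #Tᶜ := by
    refine (Coloring.mk (fun y => (⟨C (f₂ y), ?_⟩ : ↥Tᶜ))
      fun hxy heq => C.valid (f₂.map_adj hxy) (congrArg Subtype.val heq)).colorable.mono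
      (by simp)
    simp only [mem_compl, mem_filter, mem_univ, true_and, not_exists, T]
    exact fun x hx => C.valid (h x y) hx
  calc H₁.chromaticNumber + H₂.chromaticNumber ≤ (#T : ℕ∞) + (#Tᶜ : ℕ) :=
        add_le_add h₁.chromaticNumber_le h₂.chromaticNumber_le
    _ = G.chromaticNumber := by
        rw [← Nat.cast_add, card_add_card_compl, Fintype.card_fin, ENat.natCast_toNat hG]

theorem chromaticNumber_eq_induce_add_induce_compl {s : Set V}
    (hs : ∀ x ∈ s, ∀ y ∉ s, G.Adj x y) :
    G.chromaticNumber = (G.induce s).chromaticNumber + (G.induce sᶜ).chromaticNumber :=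
  le_antisymm (chromaticNumber_le_induce_add_induce_compl s)
    (chromaticNumber_add_le_of_forall_adj (Embedding.induce s).toHom (Embedding.induce sᶜ).toHom
      fun x y => hs x x.2 y y.2)

theorem card_le_pow_of_degree_lt [Fintype V] [DecidableRel G.Adj] {Δ d : ℕ}
    (hdeg : ∀ v, G.degree v < Δ) (v : V) (hd : ∀ w, ∃ p : G.Walk w v, p.length ≤ d) :
    Fintype.card V ≤ Δ ^ d := by
  classical
  have hball (n : ℕ) : #{w | ∃ p : G.Walk w v, p.length ≤ n} ≤ Δ ^ n := by
    induction n with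
    | zero =>
      refine card_le_one.2 fun a ha b hb => ?_
      obtain ⟨p, hp⟩ := (mem_filter.1 ha).2
      obtain ⟨q, hq⟩ := (mem_filter.1 hb).2
      exact (p.eq_of_length_eq_zero (by omega)).trans (q.eq_of_length_eq_zero (by omega)).symm
    | succ n ih =>
      calc #{w | ∃ p : G.Walk w v, p.length ≤ n + 1}
          ≤ #(({w | ∃ p : G.Walk w v, p.length ≤ n} : Finset V).biUnion
              fun u => insert u (G.neighborFinset u)) := by
            refine card_le_card fun w hw => ?_
            obtain ⟨p, hp⟩ := (mem_filter.1 hw).2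
            rw [mem_biUnion]
            cases p with
            | nil => exact ⟨_, by simpa using ⟨.nil, by simp⟩, mem_insert_self _ _⟩
            | cons h q =>
              refine ⟨_, by simpa using ⟨q, by simp at hp; omega⟩, ?_⟩
              simpa [mem_insert] using Or.inr h.symm
        _ ≤ #{w | ∃ p : G.Walk w v, p.length ≤ n} * Δ :=
            card_biUnion_le_card_mul _ _ _ fun u _ =>
              (card_insert_le _ _).trans ((card_neighborFinset_eq_degree G u).symm ▸ hdeg u)
        _ ≤ Δ ^ (n + 1) := by rw [pow_succ]; gcongr
  calc Fintype.card V = #{w | ∃ p : G.Walk w v, p.length ≤ d} := by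
        rw [filter_true_of_mem fun w _ => hd w, card_univ]
    _ ≤ Δ ^ d := hball d

end SimpleGraph

variable {V : Type*} {G : SimpleGraph V}

theorem not_hFree_starPlusP1 {c w : V} {I : Finset V} (hI : G.IsNIndepSet 4 I)
    (hcI : ∀ x ∈ I, G.Adj c x) (hcw : ¬G.Adj c w) (hIw : ∀ x ∈ I, ¬G.Adj x w) :
    ¬HFree (starPlusP1 4) G := by
  classical
  obtain ⟨p₁, p₂, p₃, p₄, h₁₂, h₁₃, h₁₄, h₂₃, h₂₄, h₃₄, rfl⟩ := card_eq_four.1 hI.card_eq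
  have hind : ∀ x ∈ ({p₁, p₂, p₃, p₄} : Finset V), ∀ y ∈ ({p₁, p₂, p₃, p₄} : Finset V),
      ¬G.Adj x y := fun x hx y hy hxy => hI.isIndepSet hx hy hxy.ne hxy
  simp only [mem_insert, mem_singleton, forall_eq_or_imp, forall_eq] at hcI hIw hind
  intro hfree
  refine hfree.false ⟨⟨![c, p₁, p₂, p₃, p₄, w], fun i j hij => ?_⟩, fun {i j} => ?_⟩
  -- the six vertices are distinct by the adjacency pattern alone
  · fin_cases i <;> fin_cases j <;> simp_all [G.adj_comm]
  · show G.Adj (![c, p₁, p₂, p₃, p₄, w] i) (![c, p₁, p₂, p₃, p₄, w] j) ↔ _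
    fin_cases i <;> fin_cases j <;> simp_all [starPlusP1, G.adj_comm]

theorem HFree.induce {W : Type*} {H : SimpleGraph W} (hG : HFree H G) (s : Set V) :
    HFree H (G.induce s) :=
  ⟨fun e => hG.false ((Embedding.induce s).comp e)⟩

theorem HFree.exists_walk_length_le_three (hG : HFree (pathGraph 5) G) {u v : V}
    (h : G.Reachable u v) : ∃ p : G.Walk u v, p.length ≤ 3 := by
  obtain ⟨p, hp⟩ := h.exists_walk_length_eq_dist
  -- otherwise the first five vertices of the shortest walk `p` induce a `P₅`
  refine ⟨p, not_lt.1 fun hlen => hG.false ?_⟩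
  have hdist (i j : Fin 5) :
      G.dist (p.getVert i) (p.getVert j) = max (i : ℕ) j - min (i : ℕ) j := by
    rcases le_total (i : ℕ) j with hij | hji
    · rw [p.dist_getVert_getVert_of_length_eq_dist hp hij (by omega)]
      omega
    · rw [dist_comm, p.dist_getVert_getVert_of_length_eq_dist hp hji (by omega)]
      omega
  refine ⟨⟨fun i => p.getVert i, fun i j hij => ?_⟩, fun {i j} => ?_⟩
  · have := hdist i j
    simp only [hij, dist_self] at this
    omega
  · change G.Adj (p.getVert i) (p.getVert j) ↔ _
    rw [← dist_eq_one_iff_adj, hdist, pathGraph_adj]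
    omega

theorem HFree.card_filter_adj_le_three_or_forall_adj [DecidableRel G.Adj]
    (hG : HFree (starPlusP1 4) G) {S : Finset V} (hS : G.IsIndepSet S) (z : V) :
    #{y ∈ S | G.Adj z y} ≤ 3 ∨ ∀ y ∈ S, G.Adj z y := by
  by_contra! ⟨hcard, w, hwS, hzw⟩
  obtain ⟨I, hIS, hI⟩ := exists_subset_card_eq (show 4 ≤ #{y ∈ S | G.Adj z y} by omega)
  have hIS' : I ⊆ S := hIS.trans (filter_subset _ _)
  refine not_hFree_starPlusP1 ⟨hS.mono hIS', hI⟩ (fun x hx => (mem_filter.1 (hIS hx)).2) hzw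
    (fun x hx hxw => ?_) hG
  exact hS (hIS' hx) hwS (fun h => hzw (h ▸ (mem_filter.1 (hIS hx)).2)) hxw

theorem HFree.adj_of_forall_adj_of_not_forall_adj (hG : HFree (starPlusP1 4) G)
    {S : Finset V} (hS : G.IsIndepSet S) (hS7 : 7 ≤ #S) {a b : V} (ha : ∀ y ∈ S, G.Adj a y)
    (hb : ¬∀ y ∈ S, G.Adj b y) : G.Adj a b := by
  classical
  have hlight := (hG.card_filter_adj_le_three_or_forall_adj hS b).resolve_right hb
  have hnon : 4 ≤ #{y ∈ S | ¬G.Adj b y} := by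
    have := card_filter_add_card_filter_not (s := S) fun y => G.Adj b y
    omega
  by_contra hab
  obtain ⟨I, hIS, hI⟩ := exists_subset_card_eq hnon
  have hIS' : I ⊆ S := hIS.trans (filter_subset _ _)
  exact not_hFree_starPlusP1 ⟨hS.mono hIS', hI⟩ (fun x hx => ha x (hIS' hx)) hab
    (fun x hx hxb => (mem_filter.1 (hIS hx)).2 hxb.symm) hG

theorem HFree.degree_lt_choose [Fintype V] [DecidableRel G.Adj]
    (hG : HFree (starPlusP1 4) G) {s : ℕ} (hcf : G.CliqueFree s) {S : Finset V} (hS : 16 ≤ #S)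
    (hlight : ∀ x, #{y ∈ S | G.Adj x y} ≤ 3) (c : V) : G.degree c < (s + 4).choose s := by
  classical
  by_contra! hdeg
  obtain ⟨I, hIc, hI⟩ := hcf.exists_isNIndepSet 4 (A := G.neighborFinset c) hdeg
  have hbad : #((insert c I).biUnion fun x => {y ∈ S | G.Adj x y}) < #S := by
    have := card_biUnion_le_card_mul (insert c I) (fun x => {y ∈ S | G.Adj x y}) 3
      fun x _ => hlight x
    have := card_insert_le c I
    rw [hI.card_eq] at this
    omega
  obtain ⟨w, hwS, hwbad⟩ := exists_mem_notMem_of_card_lt_card hbad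
  have hfar : ∀ x ∈ insert c I, ¬G.Adj x w := fun x hx hxw =>
    hwbad (mem_biUnion.2 ⟨x, hx, mem_filter.2 ⟨hwS, hxw⟩⟩)
  exact not_hFree_starPlusP1 hI (fun x hx => (mem_neighborFinset _ _ _).1 (hIc hx))
    (hfar c (mem_insert_self c I)) (fun x hx => hfar x (mem_insert_of_mem hx)) hG

theorem card_le_choose_pow_of_forall_not_forall_adj [Fintype V] [DecidableRel G.Adj]
    (hP5 : HFree (pathGraph 5) G) (hK : HFree (starPlusP1 4) G)
    (hconn : G.Preconnected)
    {s : ℕ} (hcf : G.CliqueFree s) {S : Finset V} (hS : G.IsNIndepSet 16 S)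
    (hfull : ∀ z, ¬∀ y ∈ S, G.Adj z y) : Fintype.card V ≤ (s + 4).choose s ^ 3 := by
  obtain ⟨v, -⟩ : S.Nonempty := card_pos.1 (by rw [hS.card_eq]; omega)
  have hlight (x : V) : #{y ∈ S | G.Adj x y} ≤ 3 :=
    (hK.card_filter_adj_le_three_or_forall_adj hS.isIndepSet x).resolve_right (hfull x)
  exact card_le_pow_of_degree_lt (hK.degree_lt_choose hcf hS.card_eq.ge hlight) v
    fun w => hP5.exists_walk_length_le_three (hconn w v)

theorem IsKVertexCritical.preconnected {k : ℕ} (hG : IsKVertexCritical G k) :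
    G.Preconnected := by
  by_contra hcon
  obtain ⟨u, v, huv⟩ : ∃ u v, ¬G.Reachable u v := by simpa [Preconnected] using hcon
  have hk : 0 < k := by exact_mod_cast pos_of_gt (hG.2 u)
  have hcol : G.Colorable (k - 1) := by
    refine colorable_iff_forall_connectedComponent.2 fun c => ?_
    obtain ⟨x, hx⟩ : ∃ x, x ∉ c.supp := by
      by_cases hu : u ∈ c.supp
      · refine ⟨v, fun hv => huv (ConnectedComponent.exact ?_)⟩
        rw [ConnectedComponent.mem_supp_iff] at hu hv
        rw [hu, hv]
      · exact ⟨u, hu⟩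
    exact (colorable_sub_one_of_chromaticNumber_lt (hG.2 x)).of_hom
      ⟨fun y => ⟨y.1, fun h => hx (h ▸ y.2)⟩, fun h => h⟩
  have := hcol.chromaticNumber_le
  rw [hG.1, Nat.cast_le] at this
  omega

theorem IsKVertexCritical.induce_of_forall_adj {k a b : ℕ} {s : Set V}
    (hG : IsKVertexCritical G k) (hs : ∀ x ∈ s, ∀ y ∉ s, G.Adj x y)
    (ha : (G.induce s).chromaticNumber = a) (hb : (G.induce sᶜ).chromaticNumber = b) :
    IsKVertexCritical (G.induce s) a := by
  refine ⟨ha, fun v => ?_⟩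
  have hk : (k : ℕ∞) = a + b := by
    rw [← hG.1, chromaticNumber_eq_induce_add_induce_compl hs, ha, hb]
  let f₁ : (G.induce s).induce {v}ᶜ →g G.induce {(v : V)}ᶜ :=
    ⟨fun x => ⟨x.1.1, fun h => x.2 (Subtype.ext h)⟩, fun h => h⟩
  let f₂ : G.induce sᶜ →g G.induce {(v : V)}ᶜ :=
    ⟨fun y => ⟨y.1, fun h => y.2 (h ▸ v.2)⟩, fun h => h⟩
  have hv := chromaticNumber_add_le_of_forall_adj f₁ f₂ fun x y => hs _ x.1.2 _ y.2
  have := hv.trans_lt (hG.2 v)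
  rw [hb, hk] at this
  exact (ENat.add_lt_add_iff_right (ENat.natCast_ne_top b)).1 this

theorem IsKVertexCritical.exists_induce_induce_compl [Finite V] {k : ℕ} {s : Set V}
    (hG : IsKVertexCritical G k) (hs : ∀ x ∈ s, ∀ y ∉ s, G.Adj x y) (hne : s.Nonempty)
    (hne' : sᶜ.Nonempty) : ∃ a b, 0 < a ∧ 0 < b ∧ a + b = k ∧
      IsKVertexCritical (G.induce s) a ∧ IsKVertexCritical (G.induce sᶜ) b := by
  have hpos {t : Set V} {n : ℕ} (ht : t.Nonempty) (hn : (G.induce t).chromaticNumber = n) :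
      0 < n := by
    have : Nonempty t := ht.to_subtype
    exact Nat.pos_of_ne_zero fun h => not_isEmpty_of_nonempty t
      (chromaticNumber_eq_zero_iff.1 (by rw [hn, h, Nat.cast_zero]))
  obtain ⟨a, ha⟩ := (G.induce s).exists_chromaticNumber_eq_natCast
  obtain ⟨b, hb⟩ := (G.induce sᶜ).exists_chromaticNumber_eq_natCast
  have hs' : ∀ x ∈ sᶜ, ∀ y ∉ sᶜ, G.Adj x y := fun x hx y hy => (hs y (not_not.1 hy) x hx).symm
  refine ⟨a, b, hpos hne ha, hpos hne' hb, ?_, hG.induce_of_forall_adj hs ha hb,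
    hG.induce_of_forall_adj hs' hb (by rwa [compl_compl])⟩
  have := chromaticNumber_eq_induce_add_induce_compl hs
  rw [hG.1, ha, hb] at this
  exact_mod_cast this.symm

/-- `(k + 17).choose 16` is the Ramsey bound for `K_{k+1}`-free graphs without an independent set
of size 16, and `(k + 5).choose 4 ^ 3` the bound in the non-join case (degrees below
`(k + 5).choose 4`, diameter at most 3). The bound proved is `k * criticalBound k`, which is
additive over joins because `criticalBound` is monotone. -/
def criticalBound (k : ℕ) : ℕ := (k + 17).choose 16 + (k + 5).choose 4 ^ 3

theorem criticalBound_mono : Monotone criticalBound := fun a b h => by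
  unfold criticalBound; gcongr

theorem IsKVertexCritical.card_le_mul_criticalBound (k : ℕ) {V : Type} [Fintype V]
    {G : SimpleGraph V} (hG : IsKVertexCritical G k) (hP5 : HFree (pathGraph 5) G)
    (hK : HFree (starPlusP1 4) G) : Fintype.card V ≤ k * criticalBound k := by
  induction k using Nat.strong_induction_on generalizing V with
  | _ k ih =>
  classical
  obtain rfl | hk := k.eq_zero_or_pos
  · have : IsEmpty V := chromaticNumber_eq_zero_iff.1 (by exact_mod_cast hG.1)
    simp
  have hcf : G.CliqueFree (k + 1) :=
    cliqueFree_of_chromaticNumber_lt (by rw [hG.1]; exact_mod_cast k.lt_succ_self)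
  have hsmall (h : Fintype.card V ≤ criticalBound k) : Fintype.card V ≤ k * criticalBound k :=
    h.trans (Nat.le_mul_of_pos_left _ hk)
  by_cases hS : ∃ S : Finset V, G.IsNIndepSet 16 S
  swap
  · refine hsmall ((hcf.card_lt_choose (not_exists.1 hS)).le.trans ?_)
    rw [criticalBound, Nat.choose_symm_add]
    exact le_self_add
  obtain ⟨S, hS⟩ := hS
  by_cases hfull : ∃ z, ∀ y ∈ S, G.Adj z y
  · set F : Set V := {z | ∀ y ∈ S, G.Adj z y}
    obtain ⟨y, hy⟩ : S.Nonempty := card_pos.1 (by rw [hS.card_eq]; omega)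
    obtain ⟨a, b, ha, hb, hab, hFa, hFb⟩ := hG.exists_induce_induce_compl (s := F)
      (fun x hx z hz => hK.adj_of_forall_adj_of_not_forall_adj hS.isIndepSet
        (by rw [hS.card_eq]; omega) hx hz) hfull ⟨y, fun h => (h y hy).ne rfl⟩
    calc Fintype.card V = Fintype.card F + Fintype.card ↥Fᶜ := by
          rw [← Fintype.card_sum]; exact Fintype.card_congr (Equiv.sumCompl (· ∈ F)).symm
      _ ≤ a * criticalBound a + b * criticalBound b :=
        add_le_add (ih a (by omega) hFa (hP5.induce F) (hK.induce F))
          (ih b (by omega) hFb (hP5.induce Fᶜ) (hK.induce Fᶜ))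
      _ ≤ a * criticalBound k + b * criticalBound k := by
        gcongr <;> exact criticalBound_mono (by omega)
      _ = k * criticalBound k := by rw [← add_mul, hab]
  · refine hsmall ?_
    calc Fintype.card V ≤ (k + 1 + 4).choose (k + 1) ^ 3 :=
          card_le_choose_pow_of_forall_not_forall_adj hP5 hK hG.preconnected hcf hS
            (not_exists.1 hfull)
      _ ≤ criticalBound k := by
          rw [criticalBound, Nat.choose_symm_add]
          exact le_add_self

theorem stmt15_general (k : ℕ) : ∃ N : ℕ,
    ∀ (V : Type) [Fintype V] (G : SimpleGraph V),
      IsKVertexCritical G k → HFree (pathGraph 5) G → HFree (starPlusP1 4) G →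
      Fintype.card V ≤ N :=
  ⟨k * criticalBound k, fun _ _ _ => IsKVertexCritical.card_le_mul_criticalBound k⟩

theorem stmt15 (k : ℕ) (hk : 1 ≤ k) : ∃ N : ℕ,
    ∀ (V : Type) [Fintype V] (G : SimpleGraph V),
      IsKVertexCritical G k → HFree (pathGraph 5) G → HFree (starPlusP1 4) G →
      Fintype.card V ≤ N :=
  stmt15_general k
end
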